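/- Let H be a real Hilbert space and let A : H → H be Lipschitz continuous (‖A(u)-A(v)‖ ≤ L‖u-v‖) and strongly monotone (⟨A(u)-A(v), u-v⟩ ≥ c‖u-v‖² with c > 0). Then A is bijective, and its inverse is Lipschitz continuous with constant 1/c. -/
import Mathlib


open scoped InnerProductSpace

theorem stmt_8 {H : Type*} [NormedAddCommGroup H] [InnerProductSpace ℝ H] [CompleteSpace H]
    (A : H → H) (L c : ℝ) (hc : 0 < c)
    (hLip : ∀ u v : H, ‖A u - A v‖ ≤ L * ‖u - v‖)
    (hMono : ∀ u v : H, ⟪A u - A v, u - v⟫_ℝ ≥ c * ‖u - v‖ ^ 2) :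
    Function.Bijective A ∧ ∀ u v : H, ‖u - v‖ ≤ (1 / c) * ‖A u - A v‖ := by
  -- the inverse Lipschitz estimate
  have hinv : ∀ u v : H, ‖u - v‖ ≤ (1 / c) * ‖A u - A v‖ := by
    intro u v
    have h1 : c * ‖u - v‖ ^ 2 ≤ ‖A u - A v‖ * ‖u - v‖ :=
      le_trans (hMono u v) (real_inner_le_norm _ _)
    rcases eq_or_ne u v with h | h
    · rw [h, sub_self, norm_zero]
      positivity
    · have hn : 0 < ‖u - v‖ := by
        rw [norm_pos_iff, sub_ne_zero]; exact h
      rw [one_div, ← div_eq_inv_mul, le_div_iff₀ hc]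
      nlinarith
  have hinj : Function.Injective A := by
    intro u v h
    have := hinv u v
    rw [h, sub_self, norm_zero, mul_zero] at this
    have : ‖u - v‖ = 0 := le_antisymm this (norm_nonneg _)
    rwa [norm_eq_zero, sub_eq_zero] at this
  have hsurj : Function.Surjective A := by
    rcases subsingleton_or_nontrivial H with hs | hs
    · intro b; exact ⟨b, Subsingleton.elim _ _⟩
    · -- c ≤ L since H is nontrivial
      obtain ⟨x, y, hxy⟩ := exists_pair_ne H
      have hxn : 0 < ‖x - y‖ := by rw [norm_pos_iff, sub_ne_zero]; exact hxy
      have hcL : c ≤ L := by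
        have h1 : c * ‖x - y‖ ^ 2 ≤ ‖A x - A y‖ * ‖x - y‖ :=
          le_trans (hMono x y) (real_inner_le_norm _ _)
        have h2 := hLip x y
        nlinarith [mul_le_mul_of_nonneg_right h2 hxn.le, mul_pos hxn hxn]
      have hL : 0 < L := lt_of_lt_of_le hc hcL
      set t : ℝ := c / L ^ 2 with ht
      have htpos : 0 < t := by positivity
      have hk2 : (0:ℝ) ≤ 1 - c ^ 2 / L ^ 2 := by
        rw [sub_nonneg, div_le_one (by positivity)]
        nlinarith
      set k : ℝ := Real.sqrt (1 - c ^ 2 / L ^ 2) with hkdef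
      have hksq : k ^ 2 = 1 - c ^ 2 / L ^ 2 := Real.sq_sqrt hk2
      have hknn : 0 ≤ k := Real.sqrt_nonneg _
      have hklt : k < 1 := by
        have h0 : 0 < c ^ 2 / L ^ 2 := by positivity
        have := Real.sqrt_lt_sqrt hk2 (show 1 - c ^ 2 / L ^ 2 < 1 by linarith)
        simpa using this
      intro b
      set f : H → H := fun u => u - t • (A u - b) with hf
      have key : ∀ u v : H, ‖f u - f v‖ ≤ k * ‖u - v‖ := by
        intro u v
        have hexp : f u - f v = (u - v) - t • (A u - A v) := by
          simp only [hf, smul_sub]; abel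
        have hsq : ‖f u - f v‖ ^ 2 =
            ‖u - v‖ ^ 2 - 2 * (t * ⟪A u - A v, u - v⟫_ℝ) + t ^ 2 * ‖A u - A v‖ ^ 2 := by
          rw [hexp, @norm_sub_sq_real, real_inner_smul_right, norm_smul]
          rw [real_inner_comm]
          rw [Real.norm_eq_abs, abs_of_pos htpos]
          ring
        have hb : ‖f u - f v‖ ^ 2 ≤ k ^ 2 * ‖u - v‖ ^ 2 := by
          rw [hsq, hksq]
          have hm := hMono u v
          have hl := hLip u v
          have ht2 : t ^ 2 * ‖A u - A v‖ ^ 2 ≤ t ^ 2 * (L * ‖u - v‖) ^ 2 :=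
            mul_le_mul_of_nonneg_left (pow_le_pow_left₀ (norm_nonneg _) hl 2) (sq_nonneg t)
          have hexpand : ‖u - v‖ ^ 2 - 2 * (t * (c * ‖u - v‖ ^ 2)) + t ^ 2 * (L * ‖u - v‖) ^ 2
              = (1 - c ^ 2 / L ^ 2) * ‖u - v‖ ^ 2 := by
            rw [ht]; field_simp; ring
          nlinarith
        nlinarith [norm_nonneg (f u - f v), norm_nonneg (u - v),
          mul_nonneg hknn (norm_nonneg (u - v))]
      have hcontr : ContractingWith ⟨k, hknn⟩ f := by
        constructor
        · exact_mod_cast hklt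
        · apply LipschitzWith.of_dist_le_mul
          intro u v
          rw [dist_eq_norm, dist_eq_norm]
          exact key u v
      obtain ⟨u, hu⟩ : ∃ u, Function.IsFixedPt f u :=
        ⟨hcontr.fixedPoint f, hcontr.fixedPoint_isFixedPt⟩
      refine ⟨u, ?_⟩
      have : t • (A u - b) = 0 := by
        have := hu
        simp only [Function.IsFixedPt, hf] at this
        have h2 : u - t • (A u - b) - u = 0 := by rw [this]; simp
        simpa using h2
      have h3 : A u - b = 0 := by
        rcases smul_eq_zero.mp this with h | h
        · exact absurd h (ne_of_gt htpos)
        · exact h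
      rw [sub_eq_zero] at h3
      exact h3
  exact ⟨⟨hinj, hsurj⟩, hinv⟩
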